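/- Fix 0 < α < 1/2 and let N_α be as defined in the context. Every sequence (a^k, b^k)_{k∈ℕ} of pairs of sequences ℤ³ → ℂ × ℂ that is bounded in the 𝓗² norm admits a subsequence (a^{k_l}, b^{k_l}) that is Cauchy with respect to N_α, i.e. N_α(a^{k_l} − a^{k_m}, b^{k_l} − b^{k_m}) → 0 as l,m → ∞. (This is the compactness of the embedding 𝓗² ↪ X^α.) -/

import Mathlib

open scoped ENNReal

noncomputable section

/-- `|n|²` for a frequency `n ∈ ℤ³`. -/
def nsq (n : Fin 3 → ℤ) : ℝ := ∑ i, ((n i : ℝ)) ^ 2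

/-- the Japanese bracket `⟨n⟩ = (1+|n|²)^{1/2}`. -/
def jap (n : Fin 3 → ℤ) : ℝ := Real.sqrt (1 + nsq n)

/-- `λ_n = (3/4 + |n|⁴)^{1/2}`. -/
def lam (n : Fin 3 → ℤ) : ℝ := Real.sqrt (3 / 4 + (nsq n) ^ 2)

/-- Action of the matrix `M_λ(t)` on a vector in `ℂ²`. -/
def Mmat (l t : ℝ) (z : ℂ × ℂ) : ℂ × ℂ :=
  (((Real.cos (t * l) + Real.sin (t * l) / (2 * l) : ℝ) : ℂ) * z.1
      + ((Real.sin (t * l) / l : ℝ) : ℂ) * z.2,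
    ((-((l - 1 / (4 * l)) * Real.sin (t * l)) : ℝ) : ℂ) * z.1
      + ((Real.cos (t * l) - Real.sin (t * l) / (2 * l) : ℝ) : ℂ) * z.2)

/-- The damped beam propagator `S(t)`, acting coordinatewise on Fourier coefficients. -/
def Sprop (t : ℝ) (u : (Fin 3 → ℤ) → ℂ × ℂ) : (Fin 3 → ℤ) → ℂ × ℂ :=
  fun n => ((Real.exp (-t / 2) : ℝ) : ℂ) • Mmat (lam n) t (u n)

/-- The squared Fourier-side Sobolev norm of `𝓗^σ = H^σ × H^{σ-2}`, with values in `ℝ≥0∞`. -/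
def sobNormSq (σ : ℝ) (u : (Fin 3 → ℤ) → ℂ × ℂ) : ℝ≥0∞ :=
  ∑' n : Fin 3 → ℤ,
    ENNReal.ofReal (jap n ^ (2 * σ) * ‖(u n).1‖ ^ 2 + jap n ^ (2 * σ - 4) * ‖(u n).2‖ ^ 2)

/-- The Fourier-side Sobolev norm of `𝓗^σ = H^σ × H^{σ-2}`. -/
def sobNorm (σ : ℝ) (u : (Fin 3 → ℤ) → ℂ × ℂ) : ℝ≥0∞ :=
  (sobNormSq σ u) ^ (1 / 2 : ℝ)


/-- The weight `w_j(n)`: `⟨n⟩^α` for the first component, `⟨n⟩^{α-2}` for the second. -/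
def weight (α : ℝ) (j : Fin 2) (n : Fin 3 → ℤ) : ℝ :=
  if j = 0 then jap n ^ α else jap n ^ (α - 2)

/-- The `j`-th component of a vector in `ℂ²`. -/
def comp (j : Fin 2) (z : ℂ × ℂ) : ℂ := if j = 0 then z.1 else z.2

/-- The `n`-th term of the weighted Fourier series of the `j`-th component of `S(t)(a,b)`
evaluated at `x ∈ ℝ³`. -/
def fourierTerm (α : ℝ) (u : (Fin 3 → ℤ) → ℂ × ℂ) (j : Fin 2) (t : ℝ) (x : Fin 3 → ℝ)
    (n : Fin 3 → ℤ) : ℂ :=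
  ((weight α j n : ℝ) : ℂ) * comp j (Sprop t u n) *
    Complex.exp (Complex.I * ((∑ i, (n i : ℝ) * x i : ℝ) : ℂ))

/-- `f_j(t,x)`: the sum of the weighted Fourier series. -/
def fSeries (α : ℝ) (u : (Fin 3 → ℤ) → ℂ × ℂ) (j : Fin 2) (t : ℝ) (x : Fin 3 → ℝ) : ℂ :=
  ∑' n : Fin 3 → ℤ, fourierTerm α u j t x n

/-- The squared `𝓗²` norm, as a real series term. -/
def h2term (u : (Fin 3 → ℤ) → ℂ × ℂ) (n : Fin 3 → ℤ) : ℝ :=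
  jap n ^ (4 : ℝ) * ‖(u n).1‖ ^ 2 + ‖(u n).2‖ ^ 2

lemma nsq_nonneg (n : Fin 3 → ℤ) : 0 ≤ nsq n :=
  Finset.sum_nonneg fun _ _ => sq_nonneg _

lemma one_le_jap (n : Fin 3 → ℤ) : 1 ≤ jap n := by
  have h1 : Real.sqrt (1+nsq n) ^ 2 = 1 + nsq n := Real.sq_sqrt (by linarith [nsq_nonneg n])
  have h2 := Real.sqrt_nonneg (1 + nsq n)
  rw [jap]; nlinarith [nsq_nonneg n]

lemma jap_pos (n : Fin 3 → ℤ) : 0 < jap n := lt_of_lt_of_le one_pos (one_le_jap n)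

lemma jap_sq (n : Fin 3 → ℤ) : jap n ^ (2:ℝ) = 1 + nsq n := by
  rw [jap, show ((2:ℝ)) = ((2:ℕ):ℝ) by norm_num, Real.rpow_natCast, Real.sq_sqrt]
  linarith [nsq_nonneg n]

lemma half_le_lam (n : Fin 3 → ℤ) : 1/2 ≤ lam n := by
  have h1 : Real.sqrt (3/4 + nsq n ^2) ^ 2 = 3/4 + nsq n ^2 := Real.sq_sqrt (by nlinarith [sq_nonneg (nsq n)])
  have h2 := Real.sqrt_nonneg (3/4 + nsq n ^2)
  rw [lam]; nlinarith [sq_nonneg (nsq n)]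

lemma lam_pos (n : Fin 3 → ℤ) : 0 < lam n := lt_of_lt_of_le (by norm_num) (half_le_lam n)

lemma lam_le_japsq (n : Fin 3 → ℤ) : lam n ≤ jap n ^ (2:ℝ) := by
  have h1 : Real.sqrt (3/4 + nsq n ^2) ^ 2 = 3/4 + nsq n ^2 := Real.sq_sqrt (by nlinarith [sq_nonneg (nsq n)])
  have h2 := Real.sqrt_nonneg (3/4 + nsq n ^2)
  rw [jap_sq, lam]; nlinarith [nsq_nonneg n]

lemma japsq_le_two_lam (n : Fin 3 → ℤ) : jap n ^ (2:ℝ) ≤ 2 * lam n := by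
  have h1 : Real.sqrt (3/4 + nsq n ^2) ^ 2 = 3/4 + nsq n ^2 := Real.sq_sqrt (by nlinarith [sq_nonneg (nsq n)])
  have h2 := Real.sqrt_nonneg (3/4 + nsq n ^2)
  rw [jap_sq, lam]; nlinarith [nsq_nonneg n, sq_nonneg (nsq n - 1)]

lemma japsq_pos' (n : Fin 3 → ℤ) : 0 < jap n ^ (2:ℝ) := Real.rpow_pos_of_pos (jap_pos n) _

lemma weighted_comp_Mmat_le (α t : ℝ) (n : Fin 3 → ℤ) (j : Fin 2) (z : ℂ × ℂ) :
    weight α j n * ‖comp j (Mmat (lam n) t z)‖ ≤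
      2 * jap n ^ (α - 2) * (jap n ^ (2:ℝ) * ‖z.1‖ + ‖z.2‖) := by
  set l := lam n with hl
  have hlpos := lam_pos n
  have hl2 := half_le_lam n
  have hlj := lam_le_japsq n
  have hj2 := japsq_le_two_lam n
  have hJ := japsq_pos' n
  have hjp := jap_pos n
  have hsin := Real.abs_sin_le_one (t * l)
  have hcos := Real.abs_cos_le_one (t * l)
  have hwa : jap n ^ α = jap n ^ (α - 2) * jap n ^ (2:ℝ) := by
    rw [← Real.rpow_add hjp]; ring_nf
  have hgpos : (0:ℝ) < jap n ^ (α - 2) := Real.rpow_pos_of_pos hjp _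
  have hrec : 1 / l ≤ 2 / (jap n ^ (2:ℝ)) := by
    rw [div_le_div_iff₀ hlpos hJ]; linarith
  by_cases hj : j = 0
  · simp only [weight, comp, Mmat, if_pos hj]
    set A := Real.cos (t*l) + Real.sin (t*l) / (2*l) with hA
    set B := Real.sin (t*l) / l with hB
    have hnorm : ‖(A:ℂ)*z.1 + (B:ℂ)*z.2‖ ≤ |A| * ‖z.1‖ + |B| * ‖z.2‖ := by
      calc ‖(A:ℂ)*z.1 + (B:ℂ)*z.2‖ ≤ ‖(A:ℂ)*z.1‖ + ‖(B:ℂ)*z.2‖ := norm_add_le _ _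
      _ = |A| * ‖z.1‖ + |B| * ‖z.2‖ := by
        simp [norm_mul, Complex.norm_real, Real.norm_eq_abs]
    have hAb : |A| ≤ 2 := by
      have h1 : |Real.sin (t*l) / (2*l)| ≤ 1 := by
        rw [abs_div, abs_of_pos (by linarith : (0:ℝ) < 2*l), div_le_one (by linarith)]
        linarith [abs_nonneg (Real.sin (t*l))]
      calc |A| ≤ |Real.cos (t*l)| + |Real.sin (t*l) / (2*l)| := abs_add_le _ _
      _ ≤ 2 := by linarith
    have hBb : jap n ^ (2:ℝ) * |B| ≤ 2 := by
      have h1 : |B| ≤ 1 / l := by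
        rw [hB, abs_div, abs_of_pos hlpos]
        gcongr
      have h2 : |B| ≤ 2 / (jap n ^ (2:ℝ)) := h1.trans hrec
      have h3 : jap n ^ (2:ℝ) * |B| ≤ jap n ^ (2:ℝ) * (2 / (jap n ^ (2:ℝ))) :=
        mul_le_mul_of_nonneg_left h2 hJ.le
      rwa [mul_div_cancel₀ _ (ne_of_gt hJ)] at h3
    calc jap n ^ α * ‖(A:ℂ)*z.1 + (B:ℂ)*z.2‖
        ≤ jap n ^ α * (|A| * ‖z.1‖ + |B| * ‖z.2‖) :=
          mul_le_mul_of_nonneg_left hnorm (Real.rpow_pos_of_pos hjp _).le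
      _ = jap n ^ (α-2) * ((jap n ^ (2:ℝ) * |A|)*‖z.1‖ + (jap n ^ (2:ℝ) * |B|)*‖z.2‖) := by
          rw [hwa]; ring
      _ ≤ jap n ^ (α-2) * ((jap n ^ (2:ℝ) * 2)*‖z.1‖ + 2*‖z.2‖) := by
          have := mul_le_mul_of_nonneg_left hAb hJ.le
          gcongr
      _ = 2 * jap n ^ (α - 2) * (jap n ^ (2:ℝ) * ‖z.1‖ + ‖z.2‖) := by ring
  · simp only [weight, comp, Mmat, if_neg hj]
    set A := -((l - 1/(4*l)) * Real.sin (t*l)) with hA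
    set B := Real.cos (t*l) - Real.sin (t*l) / (2*l) with hB
    have hnorm : ‖(A:ℂ)*z.1 + (B:ℂ)*z.2‖ ≤ |A| * ‖z.1‖ + |B| * ‖z.2‖ := by
      calc ‖(A:ℂ)*z.1 + (B:ℂ)*z.2‖ ≤ ‖(A:ℂ)*z.1‖ + ‖(B:ℂ)*z.2‖ := norm_add_le _ _
      _ = |A| * ‖z.1‖ + |B| * ‖z.2‖ := by
        simp [norm_mul, Complex.norm_real, Real.norm_eq_abs]
    have hquarter : 1 / (4*l) ≤ 1/2 := by
      rw [div_le_iff₀ (by linarith)]; linarith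
    have hAb : |A| ≤ 2 * jap n ^ (2:ℝ) := by
      have hq0 : (0:ℝ) ≤ 1/(4*l) := by positivity
      have h1 : |l - 1/(4*l)| ≤ l := by
        rw [abs_le]; constructor <;> linarith
      calc |A| = |l - 1/(4*l)| * |Real.sin (t*l)| := by rw [hA, abs_neg, abs_mul]
      _ ≤ l * 1 := mul_le_mul h1 hsin (abs_nonneg _) (by linarith)
      _ ≤ 2 * jap n ^ (2:ℝ) := by linarith
    have hBb : |B| ≤ 2 := by
      have h1 : |Real.sin (t*l) / (2*l)| ≤ 1 := by
        rw [abs_div, abs_of_pos (by linarith : (0:ℝ) < 2*l), div_le_one (by linarith)]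
        linarith [abs_nonneg (Real.sin (t*l))]
      calc |B| ≤ |Real.cos (t*l)| + |Real.sin (t*l) / (2*l)| := abs_sub _ _
      _ ≤ 2 := by linarith
    calc jap n ^ (α-2) * ‖(A:ℂ)*z.1 + (B:ℂ)*z.2‖
        ≤ jap n ^ (α-2) * (|A| * ‖z.1‖ + |B| * ‖z.2‖) :=
          mul_le_mul_of_nonneg_left hnorm hgpos.le
      _ ≤ jap n ^ (α-2) * ((2 * jap n ^ (2:ℝ))*‖z.1‖ + 2*‖z.2‖) := by gcongr
      _ = 2 * jap n ^ (α - 2) * (jap n ^ (2:ℝ) * ‖z.1‖ + ‖z.2‖) := by ring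

lemma japsq_sq (n : Fin 3 → ℤ) : (jap n ^ (2:ℝ))^2 = jap n ^ (4:ℝ) := by
  rw [← Real.rpow_natCast (jap n ^ (2:ℝ)) 2, ← Real.rpow_mul (jap_pos n).le]
  norm_num

lemma add_le_sqrt_two_mul_sqrt (a b : ℝ) (ha : 0 ≤ a) (hb : 0 ≤ b) :
    a + b ≤ Real.sqrt 2 * Real.sqrt (a^2 + b^2) := by
  rw [← Real.sqrt_mul (by norm_num)]
  have h1 : a + b = Real.sqrt ((a+b)^2) := (Real.sqrt_sq (by linarith)).symm
  rw [h1]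
  exact Real.sqrt_le_sqrt (by nlinarith [sq_nonneg (a-b)])

lemma h2term_nonneg (w : (Fin 3 → ℤ) → ℂ × ℂ) (n : Fin 3 → ℤ) : 0 ≤ h2term w n := by
  rw [h2term]
  have h1 : (0:ℝ) < jap n ^ (4:ℝ) := Real.rpow_pos_of_pos (jap_pos n) _
  have h2 := sq_nonneg ‖(w n).1‖
  have h3 := sq_nonneg ‖(w n).2‖
  nlinarith

lemma term_bound (α : ℝ) (w : (Fin 3 → ℤ) → ℂ × ℂ) (j : Fin 2) (t : ℝ) (ht : 0 ≤ t)
    (x : Fin 3 → ℝ) (n : Fin 3 → ℤ) :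
    Real.exp (t/8) * ‖fourierTerm α w j t x n‖ ≤
      2 * Real.sqrt 2 * (jap n ^ (α-2) * Real.sqrt (h2term w n)) := by
  have hjp := jap_pos n
  have hgpos : (0:ℝ) < jap n ^ (α - 2) := Real.rpow_pos_of_pos hjp _
  have hwnn : 0 ≤ weight α j n := by
    rw [weight]; split <;> exact (Real.rpow_pos_of_pos hjp _).le
  -- norm of the exponential is 1
  have hexp1 : ‖Complex.exp (Complex.I * ((∑ i, (n i : ℝ) * x i : ℝ) : ℂ))‖ = 1 := by
    rw [Complex.norm_exp]
    simp [Complex.mul_re]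
  -- rewrite the component of Sprop
  have hsmul : comp j (Sprop t w n)
      = ((Real.exp (-t/2) : ℝ) : ℂ) * comp j (Mmat (lam n) t (w n)) := by
    by_cases hj : j = 0 <;>
      simp [comp, Sprop, hj, Prod.smul_fst, Prod.smul_snd, smul_eq_mul]
  have hcompS : ‖comp j (Sprop t w n)‖
      = Real.exp (-t/2) * ‖comp j (Mmat (lam n) t (w n))‖ := by
    rw [hsmul, norm_mul, Complex.norm_real, Real.norm_eq_abs, abs_of_pos (Real.exp_pos _)]
  have hft : ‖fourierTerm α w j t x n‖
      = weight α j n * (Real.exp (-t/2) * ‖comp j (Mmat (lam n) t (w n))‖) := by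
    rw [fourierTerm, norm_mul, norm_mul, hexp1, mul_one, Complex.norm_real,
      Real.norm_eq_abs, abs_of_nonneg hwnn, hcompS]
  have hee : Real.exp (t/8) * Real.exp (-t/2) ≤ 1 := by
    rw [← Real.exp_add]
    calc Real.exp (t/8 + -t/2) ≤ Real.exp 0 := Real.exp_le_exp.mpr (by linarith)
    _ = 1 := Real.exp_zero
  have hM := weighted_comp_Mmat_le α t n j (w n)
  have hsqrt : jap n ^ (2:ℝ) * ‖(w n).1‖ + ‖(w n).2‖
      ≤ Real.sqrt 2 * Real.sqrt (h2term w n) := by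
    have := add_le_sqrt_two_mul_sqrt (jap n ^ (2:ℝ) * ‖(w n).1‖) ‖(w n).2‖
      (mul_nonneg (japsq_pos' n).le (norm_nonneg _)) (norm_nonneg _)
    rw [mul_pow, japsq_sq] at this
    exact this.trans_eq (by rw [h2term])
  have hMn : (0:ℝ) ≤ ‖comp j (Mmat (lam n) t (w n))‖ := norm_nonneg _
  calc Real.exp (t/8) * ‖fourierTerm α w j t x n‖
      = (Real.exp (t/8) * Real.exp (-t/2)) * (weight α j n * ‖comp j (Mmat (lam n) t (w n))‖) := by
        rw [hft]; ring
    _ ≤ 1 * (weight α j n * ‖comp j (Mmat (lam n) t (w n))‖) := by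
        apply mul_le_mul_of_nonneg_right hee (mul_nonneg hwnn hMn)
    _ = weight α j n * ‖comp j (Mmat (lam n) t (w n))‖ := one_mul _
    _ ≤ 2 * jap n ^ (α - 2) * (jap n ^ (2:ℝ) * ‖(w n).1‖ + ‖(w n).2‖) := hM
    _ ≤ 2 * jap n ^ (α - 2) * (Real.sqrt 2 * Real.sqrt (h2term w n)) := by
        apply mul_le_mul_of_nonneg_left hsqrt (by positivity)
    _ = 2 * Real.sqrt 2 * (jap n ^ (α-2) * Real.sqrt (h2term w n)) := by ring

lemma summable_int_one_add_sq_rpow {q : ℝ} (hq : q < -(1/2)) :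
    Summable (fun m : ℤ => (1+(m:ℝ)^2) ^ q) := by
  have hs : Summable (fun m : ℤ => |(m:ℝ)| ^ (-(-2*q))) := Real.summable_abs_int_rpow (by linarith)
  have hs2 : Summable (fun m : ℤ => (if m = 0 then (1:ℝ) else 0) + |(m:ℝ)| ^ (2*q)) := by
    apply Summable.add ?_ (by simpa using hs)
    exact summable_of_ne_finset_zero (s := {0}) (by intro b hb; simp at hb; simp [hb])
  apply Summable.of_nonneg_of_le (fun m => Real.rpow_nonneg (by positivity) q) ?_ hs2
  intro m
  by_cases hm : m = 0
  · subst hm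
    simp only [Int.cast_zero, if_pos rfl, abs_zero]
    rw [Real.zero_rpow (show 2*q ≠ 0 by linarith)]
    norm_num
  · have hm2 : (0:ℝ) < (m:ℝ)^2 := by
      have : (m:ℝ) ≠ 0 := Int.cast_ne_zero.mpr hm
      positivity
    have h1 : (1+(m:ℝ)^2) ^ q ≤ ((m:ℝ)^2) ^ q :=
      Real.rpow_le_rpow_of_nonpos hm2 (by linarith) (by linarith)
    have h2 : ((m:ℝ)^2) ^ q = |(m:ℝ)| ^ (2*q) := by
      rw [← sq_abs, ← Real.rpow_natCast |(m:ℝ)| 2, ← Real.rpow_mul (abs_nonneg _)]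
      norm_num
    simp only [if_neg hm, zero_add]
    rw [← h2]; exact h1

set_option maxHeartbeats 1000000 in
/-- summability of `(1+|n|^2)^p` over `ℤ³` for `p < -3/2`. -/
lemma summable_one_add_nsq_rpow {p : ℝ} (hp : p < -(3/2)) :
    Summable (fun n : Fin 3 → ℤ => (1 + nsq n) ^ p) := by
  set q := p/3 with hqdef
  have hq : q < -(1/2) := by rw [hqdef]; linarith
  have hq0 : q ≤ 0 := by linarith
  have h1 := summable_int_one_add_sq_rpow hq
  have hnn : ∀ m : ℤ, 0 ≤ (1+(m:ℝ)^2) ^ q := fun m => Real.rpow_nonneg (by positivity) q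
  have h2 : Summable (fun z : ℤ × ℤ × ℤ =>
      (1+(z.1:ℝ)^2) ^ q * ((1+(z.2.1:ℝ)^2) ^ q * (1+(z.2.2:ℝ)^2) ^ q)) :=
    Summable.mul_of_nonneg h1 (Summable.mul_of_nonneg h1 h1 (fun m => hnn m) (fun m => hnn m))
      (fun m => hnn m) (fun z => mul_nonneg (hnn _) (hnn _))
  have he : Function.Injective (fun n : Fin 3 → ℤ => ((n 0, n 1, n 2) : ℤ × ℤ × ℤ)) := by
    intro a b hab
    simp only [Prod.mk.injEq] at hab
    funext i
    fin_cases i <;> tauto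
  have h3 : Summable (fun n : Fin 3 → ℤ =>
      (1+((n 0):ℝ)^2) ^ q * ((1+((n 1):ℝ)^2) ^ q * (1+((n 2):ℝ)^2) ^ q)) := by
    have := h2.comp_injective he
    exact this.congr (fun n => rfl)
  apply Summable.of_nonneg_of_le
    (fun n => Real.rpow_nonneg (by linarith [nsq_nonneg n] : (0:ℝ) ≤ 1 + nsq n) p) ?_ h3
  intro n
  have hs : 0 ≤ nsq n := nsq_nonneg n
  have hfac : ∀ i : Fin 3, (1:ℝ) + (n i:ℝ)^2 ≤ 1 + nsq n := by
    intro i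
    have : ((n i:ℝ))^2 ≤ nsq n := by
      rw [nsq]
      exact Finset.single_le_sum (f := fun i => ((n i:ℝ))^2) (fun j _ => sq_nonneg _)
        (Finset.mem_univ i)
    linarith
  have hP : (0:ℝ) < ∏ i : Fin 3, (1 + (n i:ℝ)^2) :=
    Finset.prod_pos fun i _ => by positivity
  have hPle : (∏ i : Fin 3, (1 + (n i:ℝ)^2)) ≤ (1 + nsq n)^(3:ℕ) := by
    calc (∏ i : Fin 3, (1 + (n i:ℝ)^2)) ≤ ∏ _i : Fin 3, (1 + nsq n) :=
          Finset.prod_le_prod (fun i _ => by positivity) (fun i _ => hfac i)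
    _ = (1 + nsq n)^(3:ℕ) := by simp [Finset.prod_const]
  have step1 : (1 + nsq n) ^ p = ((1 + nsq n)^(3:ℕ)) ^ q := by
    rw [← Real.rpow_natCast (1 + nsq n) 3, ← Real.rpow_mul (by linarith)]
    congr 1
    rw [hqdef]; ring
  have step2 : ((1 + nsq n)^(3:ℕ)) ^ q ≤ (∏ i : Fin 3, (1 + (n i:ℝ)^2)) ^ q :=
    Real.rpow_le_rpow_of_nonpos hP hPle hq0
  have step3 : (∏ i : Fin 3, (1 + (n i:ℝ)^2)) ^ q = ∏ i : Fin 3, (1 + (n i:ℝ)^2) ^ q :=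
    (Real.finset_prod_rpow _ _ (fun i _ => by positivity) q).symm
  calc (1 + nsq n) ^ p ≤ (∏ i : Fin 3, (1 + (n i:ℝ)^2)) ^ q := by rw [step1]; exact step2
  _ = ∏ i : Fin 3, (1 + (n i:ℝ)^2) ^ q := step3
  _ = (1+((n 0):ℝ)^2) ^ q * ((1+((n 1):ℝ)^2) ^ q * (1+((n 2):ℝ)^2) ^ q) := by
      rw [Fin.prod_univ_three]; ring

lemma summable_gsq {α : ℝ} (hα : α < 1/2) :
    Summable (fun n : Fin 3 → ℤ => (jap n ^ (α - 2))^2) := by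
  have h := summable_one_add_nsq_rpow (p := α - 2) (by linarith)
  apply h.congr
  intro n
  have hj : (0:ℝ) ≤ 1 + nsq n := by linarith [nsq_nonneg n]
  have e1 : jap n ^ (α-2) = (1+nsq n) ^ ((1/2) * (α-2)) := by
    rw [jap, Real.sqrt_eq_rpow, ← Real.rpow_mul hj]
  have e2 : ((1+nsq n) ^ ((1/2)*(α-2)))^(2:ℕ) = (1+nsq n) ^ ((1/2)*(α-2)*2) := by
    rw [← Real.rpow_natCast ((1+nsq n) ^ ((1/2)*(α-2))) 2, ← Real.rpow_mul hj]
    norm_num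
  rw [e1, e2]
  congr 1
  ring

lemma h2term_sub_le (f g : (Fin 3 → ℤ) → ℂ × ℂ) (n : Fin 3 → ℤ) :
    h2term (f - g) n ≤ 2 * h2term f n + 2 * h2term g n := by
  have hJ4 : (0:ℝ) < jap n ^ (4:ℝ) := Real.rpow_pos_of_pos (jap_pos n) _
  simp only [h2term, Pi.sub_apply, Prod.fst_sub, Prod.snd_sub]
  have h1 : ‖(f n).1 - (g n).1‖^2 ≤ 2*‖(f n).1‖^2 + 2*‖(g n).1‖^2 := by
    have := norm_sub_le (f n).1 (g n).1
    nlinarith [norm_nonneg ((f n).1 - (g n).1), norm_nonneg (f n).1, norm_nonneg (g n).1,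
      sq_nonneg (‖(f n).1‖ - ‖(g n).1‖)]
  have h2 : ‖(f n).2 - (g n).2‖^2 ≤ 2*‖(f n).2‖^2 + 2*‖(g n).2‖^2 := by
    have := norm_sub_le (f n).2 (g n).2
    nlinarith [norm_nonneg ((f n).2 - (g n).2), norm_nonneg (f n).2, norm_nonneg (g n).2,
      sq_nonneg (‖(f n).2‖ - ‖(g n).2‖)]
  nlinarith [mul_le_mul_of_nonneg_left h1 hJ4.le]

lemma summable_h2_sub {f g : (Fin 3 → ℤ) → ℂ × ℂ} (hf : Summable (h2term f))
    (hg : Summable (h2term g)) : Summable (h2term (f - g)) :=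
  Summable.of_nonneg_of_le (fun n => h2term_nonneg _ n) (h2term_sub_le f g)
    ((hf.mul_left 2).add (hg.mul_left 2))

lemma tsum_h2_sub_le {f g : (Fin 3 → ℤ) → ℂ × ℂ} (hf : Summable (h2term f))
    (hg : Summable (h2term g)) :
    ∑' n, h2term (f - g) n ≤ 2 * (∑' n, h2term f n) + 2 * (∑' n, h2term g n) := by
  have h := Summable.tsum_le_tsum (h2term_sub_le f g) (summable_h2_sub hf hg)
    ((hf.mul_left 2).add (hg.mul_left 2))
  rwa [Summable.tsum_add (hf.mul_left 2) (hg.mul_left 2), tsum_mul_left, tsum_mul_left] at h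

lemma amgm_sqrt (g h δ : ℝ) (hδ : 0 < δ) (hh : 0 ≤ h) :
    2*(g * Real.sqrt h) ≤ g^2/δ + δ*h := by
  have h2 : Real.sqrt h^2 = h := Real.sq_sqrt hh
  have key : δ*(2*(g*Real.sqrt h)) ≤ g^2 + δ^2*h := by
    nlinarith [sq_nonneg (g - δ*Real.sqrt h)]
  calc 2*(g*Real.sqrt h) = (δ*(2*(g*Real.sqrt h)))/δ := by field_simp
  _ ≤ (g^2 + δ^2*h)/δ := by gcongr
  _ = g^2/δ + δ*h := by field_simp

lemma sqrt_h2_le (w : (Fin 3 → ℤ) → ℂ × ℂ) (n : Fin 3 → ℤ) :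
    Real.sqrt (h2term w n) ≤ (jap n ^ (2:ℝ) + 1) * ‖w n‖ := by
  have hJ := japsq_pos' n
  have h1 : ‖(w n).1‖ ≤ ‖w n‖ := norm_fst_le (w n)
  have h2 : ‖(w n).2‖ ≤ ‖w n‖ := norm_snd_le (w n)
  have hb : h2term w n ≤ ((jap n ^ (2:ℝ) + 1) * ‖w n‖)^2 := by
    rw [h2term, ← japsq_sq]
    have p1 : ‖(w n).1‖^2 ≤ ‖w n‖^2 := pow_le_pow_left₀ (norm_nonneg _) h1 2
    have p2 : ‖(w n).2‖^2 ≤ ‖w n‖^2 := pow_le_pow_left₀ (norm_nonneg _) h2 2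
    nlinarith [mul_le_mul_of_nonneg_left p1 (sq_nonneg (jap n ^ (2:ℝ))), p2, hJ,
      sq_nonneg ‖w n‖, mul_nonneg hJ.le (sq_nonneg ‖w n‖)]
  calc Real.sqrt (h2term w n) ≤ Real.sqrt (((jap n ^ (2:ℝ) + 1) * ‖w n‖)^2) :=
        Real.sqrt_le_sqrt hb
  _ = (jap n ^ (2:ℝ) + 1) * ‖w n‖ :=
        Real.sqrt_sq (mul_nonneg (by positivity) (norm_nonneg _))

lemma summable_norm_fourierTerm {α : ℝ} (hα : α < 1/2) {w : (Fin 3 → ℤ) → ℂ × ℂ}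
    (hw : Summable (h2term w)) (j : Fin 2) {t : ℝ} (ht : 0 ≤ t) (x : Fin 3 → ℝ) :
    Summable (fun n => ‖fourierTerm α w j t x n‖) := by
  apply Summable.of_nonneg_of_le (fun n => norm_nonneg _)
    (f := fun n => Real.sqrt 2 * ((jap n ^ (α-2))^2 + h2term w n)) ?_
    (((summable_gsq hα).add hw).mul_left _)
  intro n
  have hE1 : (1:ℝ) ≤ Real.exp (t/8) := Real.one_le_exp (by linarith)
  have hb := term_bound α w j t ht x n
  have hg : (0:ℝ) ≤ jap n ^ (α-2) := (Real.rpow_pos_of_pos (jap_pos n) _).le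
  have ham := amgm_sqrt (jap n ^ (α-2)) (h2term w n) 1 one_pos (h2term_nonneg w n)
  have hs2 : (0:ℝ) ≤ Real.sqrt 2 := Real.sqrt_nonneg 2
  calc ‖fourierTerm α w j t x n‖ ≤ Real.exp (t/8) * ‖fourierTerm α w j t x n‖ := by
        nlinarith [norm_nonneg (fourierTerm α w j t x n)]
  _ ≤ 2 * Real.sqrt 2 * (jap n ^ (α-2) * Real.sqrt (h2term w n)) := hb
  _ = Real.sqrt 2 * (2 * (jap n ^ (α-2) * Real.sqrt (h2term w n))) := by ring
  _ ≤ Real.sqrt 2 * ((jap n ^ (α-2))^2/1 + 1*(h2term w n)) :=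
        mul_le_mul_of_nonneg_left ham hs2
  _ = Real.sqrt 2 * ((jap n ^ (α-2))^2 + h2term w n) := by ring_nf

set_option maxHeartbeats 3200000 in
/-- compactness of the embedding `𝓗² ↪ X^α`: every `𝓗²`-bounded sequence has a
subsequence which is Cauchy in the `X^α` norm `N_α`. -/
theorem H2_embedding_compact (α : ℝ) (hα0 : 0 < α) (hα : α < 1 / 2)
    (u : ℕ → (Fin 3 → ℤ) → ℂ × ℂ)
    (hsum : ∀ k, Summable (h2term (u k)))
    (R : ℝ) (hbdd : ∀ k, (∑' n, h2term (u k) n) ≤ R) :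
    ∃ φ : ℕ → ℕ, StrictMono φ ∧
      ∀ ε : ℝ, 0 < ε → ∃ K : ℕ, ∀ l m : ℕ, K ≤ l → K ≤ m →
        ∀ t : ℝ, 0 ≤ t → ∀ j : Fin 2, ∀ x : Fin 3 → ℝ,
          Real.exp (t / 8) * ‖fSeries α (u (φ l) - u (φ m)) j t x‖ ≤ ε := by
  have hR0 : 0 ≤ R := le_trans (tsum_nonneg (fun n => h2term_nonneg (u 0) n)) (hbdd 0)
  -- uniform pointwise bound on Fourier coefficients
  have hptbd : ∀ k n, ‖u k n‖ ≤ Real.sqrt R := by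
    intro k n
    have h1 : h2term (u k) n ≤ R :=
      le_trans (Summable.le_tsum (hsum k) n (fun j _ => h2term_nonneg _ _)) (hbdd k)
    have h4 : (1:ℝ) ≤ jap n ^ (4:ℝ) := Real.one_le_rpow (one_le_jap n) (by norm_num)
    rw [h2term] at h1
    have ha : ‖(u k n).1‖^2 ≤ R := by nlinarith [sq_nonneg ‖(u k n).1‖, sq_nonneg ‖(u k n).2‖]
    have hb : ‖(u k n).2‖^2 ≤ R := by nlinarith [sq_nonneg ‖(u k n).1‖]
    rw [Prod.norm_def]
    apply max_le
    · rw [← Real.sqrt_sq (norm_nonneg (u k n).1)]; exact Real.sqrt_le_sqrt ha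
    · rw [← Real.sqrt_sq (norm_nonneg (u k n).2)]; exact Real.sqrt_le_sqrt hb
  -- extract a pointwise convergent subsequence via Tychonoff
  obtain ⟨v, -, φ, hφ, hconv⟩ :=
    (isCompact_univ_pi (fun n : Fin 3 → ℤ =>
      isCompact_closedBall (0 : ℂ × ℂ) (Real.sqrt R))).tendsto_subseq (x := u)
      (fun k => Set.mem_univ_pi.mpr fun n => by
        simpa [Metric.mem_closedBall, dist_zero_right] using hptbd k n)
  refine ⟨φ, hφ, ?_⟩
  intro ε hε
  have hpt : ∀ n : Fin 3 → ℤ, Filter.Tendsto (fun k => u (φ k) n) Filter.atTop (nhds (v n)) :=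
    fun n => tendsto_pi_nhds.mp hconv n
  -- constants
  set δ : ℝ := ε/(32*(R+1)) with hδdef
  have hδ : 0 < δ := by positivity
  set τ : ℝ := δ*ε/8 with hτdef
  have hτ : 0 < τ := by positivity
  have hgs := summable_gsq hα
  -- a finite set of frequencies catching all but τ of the weight series
  obtain ⟨F, hFlt⟩ := ((tendsto_tsum_compl_atTop_zero
    (fun n : Fin 3 → ℤ => (jap n ^ (α-2))^2)).eventually (gt_mem_nhds hτ)).exists
  -- finite-part constant
  set Ksum : ℝ := ∑ n ∈ F, 2*Real.sqrt 2 * (jap n ^ (α-2)) * (jap n ^ (2:ℝ) + 1) with hKdef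
  have hKsum0 : 0 ≤ Ksum := Finset.sum_nonneg fun n _ => by have := jap_pos n; positivity
  set η : ℝ := ε/(2*(Ksum+1)) with hηdef
  have hη : 0 < η := div_pos hε (by linarith)
  choose N hN using fun n => (Metric.tendsto_atTop.mp (hpt n) (η/2) (by linarith))
  refine ⟨F.sup N, ?_⟩
  intro l m hl hm t ht j x
  set w : (Fin 3 → ℤ) → ℂ × ℂ := u (φ l) - u (φ m) with hwdef
  have hsw : Summable (h2term w) := summable_h2_sub (hsum _) (hsum _)
  have hBw : ∑' n, h2term w n ≤ 4*R := by
    have := tsum_h2_sub_le (hsum (φ l)) (hsum (φ m))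
    have h1 := hbdd (φ l); have h2 := hbdd (φ m)
    nlinarith
  have hnormsum : Summable (fun n => ‖fourierTerm α w j t x n‖) :=
    summable_norm_fourierTerm hα hsw j ht x
  have hEsum : Summable (fun n => Real.exp (t/8) * ‖fourierTerm α w j t x n‖) :=
    hnormsum.mul_left _
  have hEnn : ∀ n, 0 ≤ Real.exp (t/8) * ‖fourierTerm α w j t x n‖ :=
    fun n => mul_nonneg (Real.exp_pos _).le (norm_nonneg _)
  -- step 1 : bound by the series of weighted norms
  have h0 : Real.exp (t/8) * ‖fSeries α w j t x‖
      ≤ ∑' n, Real.exp (t/8) * ‖fourierTerm α w j t x n‖ := by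
    rw [tsum_mul_left]
    exact mul_le_mul_of_nonneg_left (by rw [fSeries]; exact norm_tsum_le_tsum_norm hnormsum)
      (Real.exp_pos _).le
  -- step 2 : split into finite part and tail
  have hsplit := Summable.tsum_subtype_add_tsum_subtype_compl hEsum (↑F : Set (Fin 3 → ℤ))
  have hfin : ∑' (n : (↑F : Set (Fin 3 → ℤ))),
      Real.exp (t/8) * ‖fourierTerm α w j t x (n:Fin 3 → ℤ)‖
      = ∑ n ∈ F, Real.exp (t/8) * ‖fourierTerm α w j t x n‖ :=
    Finset.tsum_subtype' F (fun n => Real.exp (t/8) * ‖fourierTerm α w j t x n‖)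
  -- finite part estimate
  have hwsmall : ∀ n ∈ F, ‖w n‖ ≤ η := by
    intro n hn
    have hNl : N n ≤ l := le_trans (Finset.le_sup hn) hl
    have hNm : N n ≤ m := le_trans (Finset.le_sup hn) hm
    have d1 := hN n l hNl
    have d2 := hN n m hNm
    have : ‖w n‖ = dist (u (φ l) n) (u (φ m) n) := by
      rw [dist_eq_norm]; rfl
    rw [this]
    calc dist (u (φ l) n) (u (φ m) n)
        ≤ dist (u (φ l) n) (v n) + dist (u (φ m) n) (v n) := dist_triangle_right _ _ _
    _ ≤ η := by linarith
  have hfinbd : (∑ n ∈ F, Real.exp (t/8) * ‖fourierTerm α w j t x n‖) ≤ ε/2 := by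
    have hterm : ∀ n ∈ F, Real.exp (t/8) * ‖fourierTerm α w j t x n‖
        ≤ (2*Real.sqrt 2 * (jap n ^ (α-2)) * (jap n ^ (2:ℝ) + 1)) * η := by
      intro n hn
      have hb := term_bound α w j t ht x n
      have hg : (0:ℝ) ≤ jap n ^ (α-2) := (Real.rpow_pos_of_pos (jap_pos n) _).le
      have hs2 : (0:ℝ) ≤ Real.sqrt 2 := Real.sqrt_nonneg 2
      calc Real.exp (t/8) * ‖fourierTerm α w j t x n‖
          ≤ 2 * Real.sqrt 2 * (jap n ^ (α-2) * Real.sqrt (h2term w n)) := hb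
        _ ≤ 2 * Real.sqrt 2 * (jap n ^ (α-2) * ((jap n ^ (2:ℝ) + 1) * ‖w n‖)) := by
            have := mul_le_mul_of_nonneg_left (sqrt_h2_le w n) hg
            have h2s : (0:ℝ) ≤ 2 * Real.sqrt 2 := by positivity
            exact mul_le_mul_of_nonneg_left this h2s
        _ = (2*Real.sqrt 2 * (jap n ^ (α-2)) * (jap n ^ (2:ℝ) + 1)) * ‖w n‖ := by ring
        _ ≤ (2*Real.sqrt 2 * (jap n ^ (α-2)) * (jap n ^ (2:ℝ) + 1)) * η := by
            apply mul_le_mul_of_nonneg_left (hwsmall n hn)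
              (by have := jap_pos n; positivity)
    calc (∑ n ∈ F, Real.exp (t/8) * ‖fourierTerm α w j t x n‖)
        ≤ ∑ n ∈ F, (2*Real.sqrt 2 * (jap n ^ (α-2)) * (jap n ^ (2:ℝ) + 1)) * η :=
          Finset.sum_le_sum hterm
      _ = Ksum * η := by rw [hKdef, Finset.sum_mul]
      _ ≤ ε/2 := by
          have hK1 : (0:ℝ) < Ksum + 1 := by linarith
          calc Ksum * η ≤ (Ksum+1) * η := by
                apply mul_le_mul_of_nonneg_right (by linarith) hη.le
            _ = ε/2 := by rw [hηdef]; field_simp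
  -- tail estimate
  have hterm2 : ∀ n : Fin 3 → ℤ, Real.exp (t/8) * ‖fourierTerm α w j t x n‖
      ≤ (Real.sqrt 2/δ) * (jap n ^ (α-2))^2 + (Real.sqrt 2*δ) * h2term w n := by
    intro n
    have hb := term_bound α w j t ht x n
    have ham := amgm_sqrt (jap n ^ (α-2)) (h2term w n) δ hδ (h2term_nonneg w n)
    have hs2 : (0:ℝ) ≤ Real.sqrt 2 := Real.sqrt_nonneg 2
    calc Real.exp (t/8) * ‖fourierTerm α w j t x n‖
        ≤ 2 * Real.sqrt 2 * (jap n ^ (α-2) * Real.sqrt (h2term w n)) := hb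
      _ = Real.sqrt 2 * (2*(jap n ^ (α-2) * Real.sqrt (h2term w n))) := by ring
      _ ≤ Real.sqrt 2 * ((jap n ^ (α-2))^2/δ + δ*h2term w n) :=
          mul_le_mul_of_nonneg_left ham hs2
      _ = (Real.sqrt 2/δ) * (jap n ^ (α-2))^2 + (Real.sqrt 2*δ) * h2term w n := by ring
  have hsub1 : Summable (fun n : ((↑F : Set (Fin 3 → ℤ))ᶜ : Set (Fin 3 → ℤ)) =>
      (Real.sqrt 2/δ) * (jap (n:Fin 3 → ℤ) ^ (α-2))^2) := (hgs.mul_left _).subtype _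
  have hsub2 : Summable (fun n : ((↑F : Set (Fin 3 → ℤ))ᶜ : Set (Fin 3 → ℤ)) =>
      (Real.sqrt 2*δ) * h2term w (n:Fin 3 → ℤ)) := (hsw.mul_left _).subtype _
  have hc1 : ∑' (n : ((↑F : Set (Fin 3 → ℤ))ᶜ : Set (Fin 3 → ℤ))),
      (jap (n:Fin 3 → ℤ) ^ (α-2))^2 ≤ τ := le_of_lt hFlt
  have hc2 : ∑' (n : ((↑F : Set (Fin 3 → ℤ))ᶜ : Set (Fin 3 → ℤ))),
      h2term w (n:Fin 3 → ℤ) ≤ 4*R :=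
    le_trans (Summable.tsum_subtype_le (h2term w) _ (fun n => h2term_nonneg w n) hsw) hBw
  have hs2b : Real.sqrt 2 ≤ 2 := by
    nlinarith [Real.sq_sqrt (by norm_num : (0:ℝ) ≤ 2), Real.sqrt_nonneg 2]
  have hs2 : (0:ℝ) ≤ Real.sqrt 2 := Real.sqrt_nonneg 2
  have htail : ∑' (n : ((↑F : Set (Fin 3 → ℤ))ᶜ : Set (Fin 3 → ℤ))),
      Real.exp (t/8) * ‖fourierTerm α w j t x (n:Fin 3 → ℤ)‖ ≤ ε/2 := by
    have hstep : ∑' (n : ((↑F : Set (Fin 3 → ℤ))ᶜ : Set (Fin 3 → ℤ))),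
        Real.exp (t/8) * ‖fourierTerm α w j t x (n:Fin 3 → ℤ)‖
        ≤ (Real.sqrt 2/δ) * (∑' (n : ((↑F : Set (Fin 3 → ℤ))ᶜ : Set (Fin 3 → ℤ))),
            (jap (n:Fin 3 → ℤ) ^ (α-2))^2)
          + (Real.sqrt 2*δ) * (∑' (n : ((↑F : Set (Fin 3 → ℤ))ᶜ : Set (Fin 3 → ℤ))),
            h2term w (n:Fin 3 → ℤ)) := by
      rw [← tsum_mul_left, ← tsum_mul_left, ← Summable.tsum_add hsub1 hsub2]
      exact Summable.tsum_le_tsum (fun n => hterm2 n) (hEsum.subtype _) (hsub1.add hsub2)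
    have hb1 : (Real.sqrt 2/δ) * (∑' (n : ((↑F : Set (Fin 3 → ℤ))ᶜ : Set (Fin 3 → ℤ))),
        (jap (n:Fin 3 → ℤ) ^ (α-2))^2) ≤ ε/4 := by
      have h1 : (Real.sqrt 2/δ) * (∑' (n : ((↑F : Set (Fin 3 → ℤ))ᶜ : Set (Fin 3 → ℤ))),
          (jap (n:Fin 3 → ℤ) ^ (α-2))^2) ≤ (Real.sqrt 2/δ) * τ :=
        mul_le_mul_of_nonneg_left hc1 (by positivity)
      have h2 : (Real.sqrt 2/δ) * τ = Real.sqrt 2 * ε/8 := by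
        rw [hτdef]; field_simp
      rw [h2] at h1
      apply h1.trans
      nlinarith
    have hb2 : (Real.sqrt 2*δ) * (∑' (n : ((↑F : Set (Fin 3 → ℤ))ᶜ : Set (Fin 3 → ℤ))),
        h2term w (n:Fin 3 → ℤ)) ≤ ε/4 := by
      have hcnn : (0:ℝ) ≤ ∑' (n : ((↑F : Set (Fin 3 → ℤ))ᶜ : Set (Fin 3 → ℤ))),
          h2term w (n:Fin 3 → ℤ) := tsum_nonneg (fun n => h2term_nonneg w _)
      have h1 : (Real.sqrt 2*δ) * (∑' (n : ((↑F : Set (Fin 3 → ℤ))ᶜ : Set (Fin 3 → ℤ))),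
          h2term w (n:Fin 3 → ℤ)) ≤ (Real.sqrt 2*δ) * (4*R) :=
        mul_le_mul_of_nonneg_left hc2 (by positivity)
      apply h1.trans
      have h3 : (Real.sqrt 2*δ) * (4*R) ≤ (2*δ)*(4*R) := by
        apply mul_le_mul_of_nonneg_right (by nlinarith) (by nlinarith)
      apply h3.trans
      have h4 : (2*δ)*(4*R) = (R/(R+1))*(ε/4) := by
        rw [hδdef]; field_simp; ring
      rw [h4]
      have h5 : R/(R+1) ≤ 1 := by
        rw [div_le_one (by linarith)]; linarith
      nlinarith
    linarith
  -- final assembly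
  calc Real.exp (t/8) * ‖fSeries α w j t x‖
      ≤ ∑' n, Real.exp (t/8) * ‖fourierTerm α w j t x n‖ := h0
    _ = (∑ n ∈ F, Real.exp (t/8) * ‖fourierTerm α w j t x n‖)
        + ∑' (n : ((↑F : Set (Fin 3 → ℤ))ᶜ : Set (Fin 3 → ℤ))),
            Real.exp (t/8) * ‖fourierTerm α w j t x (n:Fin 3 → ℤ)‖ := by
        rw [← hsplit, hfin]
    _ ≤ ε/2 + ε/2 := add_le_add hfinbd htail
    _ = ε := by ring


end
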